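/- arXiv:1405.2441 — 2 statements merged into one kernel-verified Lean document; each statement's English description precedes it below -/
import Mathlib

section
/- Fix n ≥ 1 and a subset S = {s_1, ..., s_k} of {1, ..., n-1} with s_1 < ... < s_k, and set s_0 = 0 and s_{k+1} = n. Then the number of ordered set partitions (B_1, ..., B_{k+1}) of {1, ..., n} into exactly k+1 blocks such that the set of block minima { min B_1, ..., min B_{k+1} } equals {1, s_1 + 1, s_2 + 1, ..., s_k + 1} is ∏_{r=1}^{k+1} r^{s_r - s_{r-1}}. -/
/-!
Build the partition by adding `1, 2, …, n` one at a time. When `m` arrives, either it is a block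
minimum, and then its block is the singleton `{m}` (everything else is smaller), which can be
inserted at any of the `#{x ∈ M | x ≤ m}` positions among the blocks opened so far; or it joins
one of the `#{x ∈ M | x ≤ m}` blocks opened so far. So there are `∏ m ∈ [1, n], #{x ∈ M | x ≤ m}`
ordered partitions with minima `M`, and for `M = {s_0 + 1, …, s_k + 1}` the factor is `r` exactly
when `s_{r-1} < m ≤ s_r`.
-/

/-- For `S = {s_1 < s_2 < ⋯ < s_k} ⊆ {1, …, n-1}`, `sVal n S r` is `s_r`, with the
conventions `s_0 = 0` and `s_{k+1} = n`. -/
def sVal (n : ℕ) (S : Finset ℕ) (r : ℕ) : ℕ :=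
  if r = 0 then 0 else if r = S.card + 1 then n else (S.sort (· ≤ ·)).getD (r - 1) 0

open Finset

def IsOrderedPartitionWithMinima (n : ℕ) (M : Finset ℕ) {k : ℕ} (f : Fin k → Finset ℕ) : Prop :=
  (∀ j, (f j).Nonempty) ∧ (∀ i j, i ≠ j → Disjoint (f i) (f j)) ∧
    univ.biUnion f = Icc 1 n ∧ univ.image (fun j => sInf ((f j : Set ℕ))) = M

lemma Nat.sInf_coe_insert {A : Finset ℕ} (hA : A.Nonempty) (a : ℕ) :
    sInf ((insert a A : Finset ℕ) : Set ℕ) = min a (sInf (A : Set ℕ)) := by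
  rw [hA.csInf_eq_min', (insert_nonempty a A).csInf_eq_min', min'_insert _ _ hA]

lemma Nat.sInf_coe_erase_of_ne {A : Finset ℕ} {a : ℕ} (hA : (A.erase a).Nonempty)
    (ha : sInf (A : Set ℕ) ≠ a) : sInf ((A.erase a : Finset ℕ) : Set ℕ) = sInf (A : Set ℕ) := by
  by_cases haA : a ∈ A
  · have hmin : sInf (A : Set ℕ) = min a (sInf ((A.erase a : Finset ℕ) : Set ℕ)) := by
      rw [← Nat.sInf_coe_insert hA, insert_erase haA]
    rw [hmin] at ha ⊢
    omega
  · rw [erase_eq_of_notMem haA]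

namespace IsOrderedPartitionWithMinima

variable {n k : ℕ} {M : Finset ℕ} {f : Fin k → Finset ℕ}

lemma nonempty (h : IsOrderedPartitionWithMinima n M f) (j : Fin k) : (f j).Nonempty := h.1 j

lemma disjoint (h : IsOrderedPartitionWithMinima n M f) {i j : Fin k} (hij : i ≠ j) :
    Disjoint (f i) (f j) := h.2.1 i j hij

lemma biUnion_eq (h : IsOrderedPartitionWithMinima n M f) : univ.biUnion f = Icc 1 n :=
  h.2.2.1

lemma image_sInf_eq (h : IsOrderedPartitionWithMinima n M f) :
    univ.image (fun j => sInf ((f j : Set ℕ))) = M :=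
  h.2.2.2

lemma mem_Icc_iff (h : IsOrderedPartitionWithMinima n M f) {x : ℕ} :
    x ∈ Icc 1 n ↔ ∃ j, x ∈ f j := by
  simp [← h.biUnion_eq]

lemma mem_minima_iff (h : IsOrderedPartitionWithMinima n M f) {y : ℕ} :
    y ∈ M ↔ ∃ j, sInf (f j : Set ℕ) = y := by
  simp [← h.image_sInf_eq]

lemma sInf_mem (h : IsOrderedPartitionWithMinima n M f) (j : Fin k) : sInf (f j : Set ℕ) ∈ f j :=
  Nat.sInf_mem (coe_nonempty.2 (h.nonempty j))

lemma eq_of_mem (h : IsOrderedPartitionWithMinima n M f) {i j : Fin k} {x : ℕ} (hi : x ∈ f i)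
    (hj : x ∈ f j) : i = j := by
  by_contra hij
  exact disjoint_left.1 (h.disjoint hij) hi hj

lemma succ_notMem (h : IsOrderedPartitionWithMinima n M f) (j : Fin k) : n + 1 ∉ f j := by
  intro hx
  have := h.mem_Icc_iff.2 ⟨j, hx⟩
  simp at this

lemma update_insert (h : IsOrderedPartitionWithMinima n M f) (j₀ : Fin k) :
    IsOrderedPartitionWithMinima (n + 1) M (Function.update f j₀ (insert (n + 1) (f j₀))) := by
  refine ⟨fun j => ?_, fun i j hij => ?_, ?_, ?_⟩
  · rcases eq_or_ne j j₀ with rfl | hj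
    · simp
    · simpa [hj] using h.nonempty j
  · rcases eq_or_ne i j₀ with rfl | hi
    · simpa [Function.update_of_ne hij.symm, h.succ_notMem j] using h.disjoint hij
    rcases eq_or_ne j j₀ with rfl | hj
    · simpa [Function.update_of_ne hi, h.succ_notMem i] using h.disjoint hij
    · simpa [Function.update_of_ne hi, Function.update_of_ne hj] using h.disjoint hij
  · have hU : univ.biUnion (Function.update f j₀ (insert (n + 1) (f j₀))) =
        insert (n + 1) (univ.biUnion f) := by
      rw [← insert_erase (mem_univ j₀), biUnion_insert, biUnion_insert, Function.update_self,
        biUnion_congr rfl fun j hj => Function.update_of_ne (ne_of_mem_erase hj) _ f, insert_union]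
    rw [hU, h.biUnion_eq, insert_Icc_right_eq_Icc_add_one (by omega)]
  · rw [← h.image_sInf_eq]
    refine image_congr fun j _ => ?_
    rcases eq_or_ne j j₀ with rfl | hj
    · have := h.mem_Icc_iff.2 ⟨j, h.sInf_mem j⟩
      simp only [Function.update_self, Nat.sInf_coe_insert (h.nonempty j), mem_Icc] at this ⊢
      omega
    · simp [hj]

lemma erase_succ (h : IsOrderedPartitionWithMinima (n + 1) M f) (hM : n + 1 ∉ M) :
    IsOrderedPartitionWithMinima n M (fun j => (f j).erase (n + 1)) := by
  have hmin (j : Fin k) : sInf (f j : Set ℕ) ≠ n + 1 := fun he =>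
    hM (h.mem_minima_iff.2 ⟨j, he⟩)
  have hne (j : Fin k) : ((f j).erase (n + 1)).Nonempty := ⟨_, mem_erase.2 ⟨hmin j, h.sInf_mem j⟩⟩
  refine ⟨hne, fun i j hij => (h.disjoint hij).mono (erase_subset _ _) (erase_subset _ _), ?_, ?_⟩
  · rw [← erase_biUnion, h.biUnion_eq, Icc_erase_right, Ico_add_one_right_eq_Icc]
  · rw [← h.image_sInf_eq]
    exact image_congr fun j _ => Nat.sInf_coe_erase_of_ne (hne j) (hmin j)

lemma erase_update_insert (h : IsOrderedPartitionWithMinima n M f) (j₀ j : Fin k) :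
    (Function.update f j₀ (insert (n + 1) (f j₀)) j).erase (n + 1) = f j := by
  rcases eq_or_ne j j₀ with rfl | hj
  · rw [Function.update_self, erase_insert (h.succ_notMem j)]
  · rw [Function.update_of_ne hj, erase_eq_of_notMem (h.succ_notMem j)]

lemma insertNth_singleton {f : Fin k → Finset ℕ} (h : IsOrderedPartitionWithMinima n M f)
    (j₀ : Fin (k + 1)) :
    IsOrderedPartitionWithMinima (n + 1) (insert (n + 1) M) (Fin.insertNth j₀ {n + 1} f) := by
  refine ⟨?_, ?_, ?_, ?_⟩
  · simpa [Fin.forall_iff_succAbove j₀] using h.nonempty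
  · simp only [Fin.forall_iff_succAbove j₀, Fin.insertNth_apply_same,
      Fin.insertNth_apply_succAbove, ne_eq, Fin.succAbove_ne, Fin.succAbove_right_inj,
      disjoint_singleton_left, disjoint_singleton_right, h.succ_notMem]
    exact ⟨by simp, fun i => ⟨by simp, fun j hij => h.disjoint hij⟩⟩
  · ext x
    simp [Fin.exists_iff_succAbove j₀, ← h.mem_Icc_iff]
    omega
  · ext y
    simp [Fin.exists_iff_succAbove j₀, h.mem_minima_iff, eq_comm]

lemma eq_singleton_of_sInf_eq (h : IsOrderedPartitionWithMinima (n + 1) M f) {j : Fin k}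
    (hj : sInf (f j : Set ℕ) = n + 1) : f j = {n + 1} := by
  refine eq_singleton_iff_unique_mem.2 ⟨hj ▸ h.sInf_mem j, fun x hx => ?_⟩
  have h₁ := (mem_Icc.1 (h.mem_Icc_iff.2 ⟨j, hx⟩)).2
  have h₂ : n + 1 ≤ x := hj ▸ Nat.sInf_le hx
  omega

lemma removeNth {f : Fin (k + 1) → Finset ℕ} (h : IsOrderedPartitionWithMinima (n + 1) M f)
    {j₀ : Fin (k + 1)} (hj₀ : f j₀ = {n + 1}) :
    IsOrderedPartitionWithMinima n (M.erase (n + 1)) (Fin.removeNth j₀ f) := by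
  have hnot (i : Fin k) : n + 1 ∉ f (j₀.succAbove i) := fun hx =>
    Fin.succAbove_ne j₀ i (h.eq_of_mem hx (hj₀ ▸ mem_singleton_self _))
  refine ⟨fun i => h.nonempty _, fun i j hij => h.disjoint (by simpa using hij), ?_, ?_⟩
  · ext x
    have hx := h.mem_Icc_iff (x := x)
    simp only [Fin.exists_iff_succAbove j₀, hj₀, mem_singleton, mem_Icc] at hx
    simp only [mem_biUnion, mem_univ, true_and, Fin.removeNth_apply, mem_Icc]
    have hne (i : Fin k) (hi : x ∈ f (j₀.succAbove i)) : x ≠ n + 1 := fun e => hnot i (e ▸ hi)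
    grind
  · ext y
    have hy := h.mem_minima_iff (y := y)
    simp only [Fin.exists_iff_succAbove j₀, hj₀, coe_singleton, csInf_singleton] at hy
    have hne (i : Fin k) : sInf (f (j₀.succAbove i) : Set ℕ) ≠ n + 1 := fun e =>
      hnot i (e ▸ h.sInf_mem _)
    simp only [mem_image, mem_univ, true_and, Fin.removeNth_apply, mem_erase, hy]
    grind

end IsOrderedPartitionWithMinima

section Card

variable {n k : ℕ} {M : Finset ℕ}

theorem card_isOrderedPartitionWithMinima_succ_of_notMem (hM : n + 1 ∉ M) :
    Nat.card {f : Fin k → Finset ℕ // IsOrderedPartitionWithMinima (n + 1) M f} =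
      k * Nat.card {f : Fin k → Finset ℕ // IsOrderedPartitionWithMinima n M f} := by
  let φ (p : Fin k × {g : Fin k → Finset ℕ // IsOrderedPartitionWithMinima n M g}) :
      {f : Fin k → Finset ℕ // IsOrderedPartitionWithMinima (n + 1) M f} :=
    ⟨Function.update p.2.1 p.1 (insert (n + 1) (p.2.1 p.1)), p.2.2.update_insert p.1⟩
  have hφ : Function.Bijective φ := by
    refine ⟨?_, fun ⟨f, hf⟩ => ?_⟩
    · rintro ⟨j₀, g, hg⟩ ⟨j₁, g', hg'⟩ he
      have he' : Function.update g j₀ (insert (n + 1) (g j₀)) =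
          Function.update g' j₁ (insert (n + 1) (g' j₁)) := congrArg Subtype.val he
      obtain rfl : j₀ = j₁ := (hg'.update_insert j₁).eq_of_mem
        (he' ▸ by simp : n + 1 ∈ Function.update g' j₁ (insert (n + 1) (g' j₁)) j₀) (by simp)
      obtain rfl : g = g' := funext fun j => by
        rw [← hg.erase_update_insert j₀ j, ← hg'.erase_update_insert j₀ j, he']
      rfl
    · obtain ⟨j₀, hj₀⟩ := hf.mem_Icc_iff.1 (mem_Icc.2 ⟨by omega, le_rfl⟩)
      refine ⟨(j₀, ⟨_, hf.erase_succ hM⟩), Subtype.ext (funext fun j => ?_)⟩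
      rcases eq_or_ne j j₀ with rfl | hj
      · exact (Function.update_self ..).trans (insert_erase hj₀)
      · exact (Function.update_of_ne hj ..).trans
          (erase_eq_of_notMem fun hx => hj (hf.eq_of_mem hx hj₀))
  simp [← Nat.card_eq_of_bijective φ hφ, Nat.card_prod]

theorem card_isOrderedPartitionWithMinima_succ_of_mem (hM : n + 1 ∈ M) :
    Nat.card {f : Fin (k + 1) → Finset ℕ // IsOrderedPartitionWithMinima (n + 1) M f} =
      (k + 1) * Nat.card {f : Fin k → Finset ℕ //
        IsOrderedPartitionWithMinima n (M.erase (n + 1)) f} := by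
  let φ (p : Fin (k + 1) × {g : Fin k → Finset ℕ //
      IsOrderedPartitionWithMinima n (M.erase (n + 1)) g}) :
      {f : Fin (k + 1) → Finset ℕ // IsOrderedPartitionWithMinima (n + 1) M f} :=
    ⟨Fin.insertNth p.1 {n + 1} p.2.1, by
      simpa only [insert_erase hM] using p.2.2.insertNth_singleton p.1⟩
  have hφ : Function.Bijective φ := by
    refine ⟨?_, fun ⟨f, hf⟩ => ?_⟩
    · rintro ⟨j₀, g, hg⟩ ⟨j₁, g', hg'⟩ he
      have he' : Fin.insertNth (α := fun _ => Finset ℕ) j₀ {n + 1} g =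
          Fin.insertNth j₁ {n + 1} g' :=
        congrArg Subtype.val he
      obtain rfl : j₀ = j₁ := by
        by_contra hne
        obtain ⟨i, rfl⟩ := Fin.exists_succAbove_eq hne
        have := congrFun he' (j₁.succAbove i)
        simp only [Fin.insertNth_apply_same, Fin.insertNth_apply_succAbove] at this
        exact hg'.succ_notMem i (this ▸ mem_singleton_self _)
      obtain rfl : g = g' := Fin.insertNth_right_injective _ he'
      rfl
    · obtain ⟨j₀, hj₀⟩ := hf.mem_minima_iff.1 hM
      have hsingle := hf.eq_singleton_of_sInf_eq hj₀
      refine ⟨(j₀, ⟨_, hf.removeNth hsingle⟩), Subtype.ext ?_⟩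
      change Fin.insertNth j₀ {n + 1} (Fin.removeNth j₀ f) = f
      rw [← hsingle, Fin.insertNth_self_removeNth]
  simp [← Nat.card_eq_of_bijective φ hφ, Nat.card_prod]

lemma prod_card_filter_le_Icc_succ (hM : M ⊆ Icc 1 (n + 1)) :
    ∏ m ∈ Icc 1 (n + 1), #{x ∈ M | x ≤ m} =
      #M * ∏ m ∈ Icc 1 n, #{x ∈ M.erase (n + 1) | x ≤ m} := by
  rw [prod_Icc_succ_top (by omega), mul_comm, filter_true_of_mem fun x hx => (mem_Icc.1 (hM hx)).2]
  congr 1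
  refine prod_congr rfl fun m hm => ?_
  rw [filter_erase, erase_eq_of_notMem fun h => by simp at hm h; omega]

theorem card_isOrderedPartitionWithMinima (hM : M ⊆ Icc 1 n) (hk : #M = k) :
    Nat.card {f : Fin k → Finset ℕ // IsOrderedPartitionWithMinima n M f} =
      ∏ m ∈ Icc 1 n, #{x ∈ M | x ≤ m} := by
  induction n generalizing M k with
  | zero =>
    obtain rfl : M = ∅ := subset_empty.1 (by simpa using hM)
    obtain rfl : k = 0 := hk.symm
    rw [Icc_eq_empty (by omega), prod_empty, Nat.card_eq_one_iff_exists]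
    exact ⟨⟨Fin.elim0, fun j => j.elim0, fun i => i.elim0, rfl, rfl⟩,
      fun f => Subtype.ext (Subsingleton.elim _ _)⟩
  | succ n ih =>
    have hM' : M.erase (n + 1) ⊆ Icc 1 n := fun x hx => by
      have := mem_Icc.1 (hM (mem_of_mem_erase hx))
      have := ne_of_mem_erase hx
      exact mem_Icc.2 (by omega)
    rw [prod_card_filter_le_Icc_succ hM, hk]
    by_cases hmem : n + 1 ∈ M
    · obtain ⟨k, rfl⟩ : ∃ k', k = k' + 1 := ⟨k - 1, by have := card_pos.2 ⟨_, hmem⟩; omega⟩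
      rw [card_isOrderedPartitionWithMinima_succ_of_mem hmem,
        ih hM' (by rw [card_erase_of_mem hmem]; omega)]
    · rw [erase_eq_of_notMem hmem] at hM' ⊢
      rw [card_isOrderedPartitionWithMinima_succ_of_notMem hmem, ih hM' hk]

end Card

lemma filter_range_lt_eq_range {s : ℕ → ℕ} {K r m : ℕ} (hs : MonotoneOn s (Set.Iic K))
    (hr : r + 1 ≤ K) (hm : m ∈ Ioc (s r) (s (r + 1))) :
    {j ∈ range K | s j < m} = range (r + 1) := by
  rw [mem_Ioc] at hm
  ext j
  simp only [mem_filter, mem_range]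
  constructor
  · rintro ⟨hjK, hj⟩
    by_contra! hrj
    have := hs (Set.mem_Iic.2 hr) (Set.mem_Iic.2 hjK.le) hrj
    omega
  · intro hj
    have := hs (Set.mem_Iic.2 (by omega)) (Set.mem_Iic.2 (by omega)) (Nat.le_of_lt_succ hj)
    exact ⟨by omega, by omega⟩

theorem prod_Ioc_card_filter_range_lt {s : ℕ → ℕ} {K : ℕ} (hs : MonotoneOn s (Set.Iic K))
    {R : ℕ} (hR : R ≤ K) :
    ∏ m ∈ Ioc (s 0) (s R), #{j ∈ range K | s j < m} = ∏ r ∈ Icc 1 R, r ^ (s r - s (r - 1)) := by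
  induction R with
  | zero => simp
  | succ R ih =>
    have hle {a b : ℕ} (hab : a ≤ b) (hb : b ≤ R + 1) : s a ≤ s b :=
      hs (Set.mem_Iic.2 (by omega)) (Set.mem_Iic.2 (by omega)) hab
    have hlast : ∏ m ∈ Ioc (s R) (s (R + 1)), #{j ∈ range K | s j < m} =
        (R + 1) ^ (s (R + 1) - s R) := by
      rw [prod_congr rfl fun m hm => by rw [filter_range_lt_eq_range hs hR hm, card_range],
        prod_const, Nat.card_Ioc]
    rw [← prod_Ioc_consecutive _ (hle R.zero_le (by omega)) (hle (by omega) le_rfl), ih (by omega),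
      hlast, prod_Icc_succ_top (by omega), Nat.add_sub_cancel]

lemma sVal_zero (n : ℕ) (S : Finset ℕ) : sVal n S 0 = 0 := rfl

lemma sVal_card_add_one (n : ℕ) (S : Finset ℕ) : sVal n S (#S + 1) = n := by
  simp [sVal]

lemma sVal_add_one (n : ℕ) (S : Finset ℕ) (i : Fin #S) :
    sVal n S (i + 1) = S.orderEmbOfFin rfl i := by
  simp [sVal, orderEmbOfFin_apply, i.2.ne]

lemma strictMonoOn_sVal {n : ℕ} {S : Finset ℕ} (hn : 1 ≤ n) (hS : S ⊆ Icc 1 (n - 1)) :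
    StrictMonoOn (sVal n S) (Set.Iic (#S + 1)) := by
  have hmem (i : Fin #S) := mem_Icc.1 (hS (S.orderEmbOfFin_mem rfl i))
  refine strictMonoOn_Iic_of_lt_succ fun m hm => ?_
  rw [Order.succ_eq_add_one]
  rcases m with _ | m
  · rcases (#S).eq_zero_or_pos with h0 | h0
    · have h1 : sVal n S 1 = n := by simpa [h0] using sVal_card_add_one n S
      rw [sVal_zero, zero_add, h1]
      omega
    · have := hmem ⟨0, h0⟩
      rw [sVal_zero, sVal_add_one n S ⟨0, h0⟩]
      omega
  · rw [sVal_add_one n S ⟨m, by omega⟩]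
    rcases (show m + 1 < #S ∨ m + 1 = #S by omega) with hlt | heq
    · rw [sVal_add_one n S ⟨m + 1, hlt⟩]
      exact (S.orderEmbOfFin rfl).strictMono (Fin.mk_lt_mk.2 (Nat.lt_succ_self m))
    · have := hmem ⟨m, by omega⟩
      rw [heq, sVal_card_add_one]
      omega

lemma insert_one_image_add_one_eq_image_sVal (n : ℕ) (S : Finset ℕ) :
    insert 1 (S.image (· + 1)) = (range (#S + 1)).image (sVal n S · + 1) := by
  ext x
  simp only [mem_insert, mem_image, mem_range]
  constructor
  · rintro (rfl | ⟨a, ha, rfl⟩)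
    · exact ⟨0, by omega, rfl⟩
    · rw [← mem_coe, ← S.range_orderEmbOfFin rfl] at ha
      obtain ⟨i, rfl⟩ := ha
      exact ⟨i + 1, by omega, by rw [sVal_add_one]⟩
  · rintro ⟨_ | j, hj, rfl⟩
    · exact .inl rfl
    · rw [sVal_add_one n S ⟨j, by omega⟩]
      exact .inr ⟨_, S.orderEmbOfFin_mem rfl _, rfl⟩

theorem card_isOrderedPartitionWithMinima_image {s : ℕ → ℕ} {K : ℕ}
    (hs : StrictMonoOn s (Set.Iic K)) (hs0 : s 0 = 0) :
    Nat.card {f : Fin K → Finset ℕ //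
        IsOrderedPartitionWithMinima (s K) ((range K).image (s · + 1)) f} =
      ∏ r ∈ Icc 1 K, r ^ (s r - s (r - 1)) := by
  have hinj : Set.InjOn (s · + 1) (range K) := fun i hi j hj h =>
    hs.injOn (Set.mem_Iic.2 (mem_range.1 hi).le) (Set.mem_Iic.2 (mem_range.1 hj).le)
      (Nat.add_right_cancel h)
  have hsub : (range K).image (s · + 1) ⊆ Icc 1 (s K) := by
    intro x hx
    obtain ⟨j, hj, rfl⟩ := mem_image.1 hx
    have := hs (Set.mem_Iic.2 (mem_range.1 hj).le) (Set.mem_Iic.2 le_rfl) (mem_range.1 hj)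
    exact mem_Icc.2 ⟨by omega, by omega⟩
  rw [card_isOrderedPartitionWithMinima hsub (by rw [card_image_of_injOn hinj, card_range]),
    ← prod_Ioc_card_filter_range_lt hs.monotoneOn le_rfl, hs0]
  refine prod_congr rfl fun m _ => ?_
  rw [filter_image, card_image_of_injOn (hinj.mono (filter_subset _ _))]
  simp only [Nat.add_one_le_iff]

/-- Let `S = {s_1 < ⋯ < s_k} ⊆ {1, …, n-1}`, with `s_0 = 0` and `s_{k+1} = n`.  The number
of ordered set partitions `(B_1, …, B_{k+1})` of `{1, …, n}` into exactly `k+1` blocks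
(pairwise disjoint nonempty sets covering `{1, …, n}`) whose set of block minima
`{min B_1, …, min B_{k+1}}` equals `{1, s_1 + 1, …, s_k + 1}` is
`∏_{r=1}^{k+1} r^(s_r - s_{r-1})`. -/
theorem card_ordered_set_partitions_with_minima (n : ℕ) (hn : 1 ≤ n) (S : Finset ℕ)
    (hS : S ⊆ Finset.Icc 1 (n - 1)) :
    Nat.card {f : Fin (S.card + 1) → Finset ℕ //
        (∀ j, (f j).Nonempty) ∧ (∀ i j, i ≠ j → Disjoint (f i) (f j)) ∧
        Finset.univ.biUnion f = Finset.Icc 1 n ∧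
        Finset.univ.image (fun j => sInf ((f j : Set ℕ))) = insert 1 (S.image (· + 1))} =
      ∏ r ∈ Finset.Icc 1 (S.card + 1), r ^ (sVal n S r - sVal n S (r - 1)) := by
  have := card_isOrderedPartitionWithMinima_image (strictMonoOn_sVal hn hS) (sVal_zero n S)
  rwa [sVal_card_add_one, ← insert_one_image_add_one_eq_image_sVal] at this
end

section
/- Fix n ≥ 1 and a subset S = {s_1, ..., s_k} of {1, ..., n-1} with s_1 < ... < s_k. Then the number of permutations π of {1, ..., n} with A(π) ⊆ S equals the number of inversion tables b of length n such that every element of {1, ..., n-1} missing from dent(b) lies in {n - s_1, n - s_2, ..., n - s_k}; equivalently, {0, 1, ..., n-1} \ {n - s_1, ..., n - s_k} ⊆ dent(b). -/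
/-!
Both counts satisfy `c 0 = 1` and `c (n + 1) = (1 + #(S ∩ [1, n])) * c n`.

Permutations: inserting the letter `n + 1` into a permutation of `[n]` directly after the letter `a`
creates exactly one new ascent bottom, `a`; inserting it in front creates none.

Inversion tables: the entries of a table of length `n + 1` after the first form a table of
length `n`. Splitting off the first entry and inducting on `n` shows that the tables of length
`n + 1` taking every value of `R + 1` are `1 + #([0, n) \ R)` times as many as the tables of
length `n` taking every value of `R`. As `n` grows, the required values `[0, n) \ (n - S)` shift
in exactly this way, up to the value `0`, which the last entry of every nonempty table takes.
-/

/-- The `i`-th value (1-indexed) of the permutation `π` of `{1, …, n}`, i.e. `a_i ∈ {1, …, n}`.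
For `i` outside `{1, …, n}` a junk value is returned. -/
def pval {n : ℕ} (π : Equiv.Perm (Fin n)) (i : ℕ) : ℕ :=
  if h : i - 1 < n then (π ⟨i - 1, h⟩ : ℕ) + 1 else 0

/-- The set of ascent bottoms `A(π) = { a_i : i ∈ {1, …, n-1}, a_i < a_{i+1} }`. -/
def ascentBottoms {n : ℕ} (π : Equiv.Perm (Fin n)) : Finset ℕ :=
  ((Finset.Icc 1 (n - 1)).filter fun i => pval π i < pval π (i + 1)).image (pval π)

/-- `b : Fin n → ℕ` is an inversion table of length `n` if `b_i ≤ n - i` for every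
(1-indexed) `i ∈ {1, …, n}`. -/
def IsInvTable {n : ℕ} (b : Fin n → ℕ) : Prop :=
  ∀ i : Fin n, b i ≤ n - ((i : ℕ) + 1)

/-- `dent b` is the set of distinct entries of `b`. -/
def dent {n : ℕ} (b : Fin n → ℕ) : Finset ℕ :=
  Finset.image b Finset.univ

open Finset

def invTables (n : ℕ) : Finset (Fin n → ℕ) :=
  Fintype.piFinset fun i => range (n - i)

theorem mem_invTables {n : ℕ} {b : Fin n → ℕ} : b ∈ invTables n ↔ IsInvTable b := by
  simp only [invTables, Fintype.mem_piFinset, mem_range, IsInvTable]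
  exact forall_congr' fun i => by omega

def invTablesCovering (n : ℕ) (R : Finset ℕ) : Finset (Fin n → ℕ) :=
  (invTables n).filter fun b => R ⊆ dent b

theorem dent_cons {n : ℕ} (v : ℕ) (c : Fin n → ℕ) :
    dent (Fin.cons v c : Fin (n + 1) → ℕ) = insert v (dent c) := by
  ext x
  simp [dent, Fin.exists_fin_succ, eq_comm]

theorem invTables_succ (n : ℕ) :
    invTables (n + 1) =
      (range (n + 1) ×ˢ invTables n).map (Fin.consEquiv fun _ => ℕ).toEmbedding := by
  have := filter_piFinset_eq_map_consEquiv (fun i : Fin (n + 1) => range (n + 1 - i)) fun _ => True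
  simp only [filter_true] at this
  rw [invTables, this]
  congr 3
  ext i : 1
  simp [Fin.tail]

theorem card_invTablesCovering_succ (n : ℕ) (R : Finset ℕ) :
    #(invTablesCovering (n + 1) R) = ∑ v ∈ range (n + 1), #(invTablesCovering n (R.erase v)) := by
  simp only [invTablesCovering, card_filter, invTables_succ, sum_map, sum_product]
  refine sum_congr rfl fun v _ => sum_congr rfl fun c _ => ?_
  simp only [Equiv.toEmbedding_apply, Fin.consEquiv, Equiv.coe_fn_mk, dent_cons, subset_insert_iff]

theorem invTablesCovering_eq_empty {n x : ℕ} {R : Finset ℕ} (hx : x ∈ R) (hn : n ≤ x) :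
    invTablesCovering n R = ∅ := by
  refine filter_eq_empty_iff.2 fun b hb hR => ?_
  obtain ⟨i, -, hi⟩ := mem_image.1 (hR hx)
  have := mem_invTables.1 hb i
  omega

theorem invTablesCovering_erase_zero {n : ℕ} (hn : 0 < n) (R : Finset ℕ) :
    invTablesCovering n (R.erase 0) = invTablesCovering n R := by
  refine filter_congr fun b hb => ?_
  have h0 : 0 ∈ dent b := mem_image.2 ⟨⟨n - 1, by omega⟩, mem_univ _, Nat.le_zero.1 <|
    (mem_invTables.1 hb _).trans_eq (show n - (n - 1 + 1) = 0 by omega)⟩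
  rw [← subset_insert_iff, insert_eq_of_mem h0]

theorem card_invTablesCovering_succ_of_mem {n : ℕ} {R : Finset ℕ} (hn : n ∈ R) :
    #(invTablesCovering (n + 1) R) = #(invTablesCovering n (R.erase n)) := by
  rw [card_invTablesCovering_succ, sum_eq_single_of_mem n (self_mem_range_succ n)]
  intro u _ hu
  rw [invTablesCovering_eq_empty (mem_erase.2 ⟨Ne.symm hu, hn⟩) le_rfl, card_empty]

theorem card_invTablesCovering_succ_map (n : ℕ) (R : Finset ℕ) :
    #(invTablesCovering (n + 1) (R.map (addRightEmbedding 1))) =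
      #(invTablesCovering n (R.map (addRightEmbedding 1))) +
        ∑ u ∈ range n, #(invTablesCovering n ((R.erase u).map (addRightEmbedding 1))) := by
  have h0 : 0 ∉ R.map (addRightEmbedding 1) := by simp
  rw [card_invTablesCovering_succ, sum_range_succ', add_comm, erase_eq_of_notMem h0]
  simp only [map_erase, addRightEmbedding_apply]

theorem card_invTablesCovering_map_succ {n : ℕ} {R : Finset ℕ} (hR : R ⊆ range n) :
    #(invTablesCovering (n + 1) (R.map (addRightEmbedding 1))) =
      (#(range n \ R) + 1) * #(invTablesCovering n R) := by
  induction n generalizing R with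
  | zero =>
    obtain rfl : R = ∅ := subset_empty.1 hR
    simp [card_invTablesCovering_succ]
  | succ n ih =>
    by_cases hn : n ∈ R
    · have hR' : R.erase n ⊆ range n := fun x hx => mem_range.2 <|
        (mem_range_succ_iff.1 (hR (mem_of_mem_erase hx))).lt_of_ne (ne_of_mem_erase hx)
      have hcompl : range (n + 1) \ R = range n \ R.erase n := by
        rw [range_add_one, insert_sdiff_of_mem _ hn,
          ← sdiff_insert_of_notMem notMem_range_self (R.erase n), insert_erase hn]
      rw [card_invTablesCovering_succ_of_mem (n := n + 1) (mem_map_of_mem (addRightEmbedding 1) hn),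
        show (R.map (addRightEmbedding 1)).erase (n + 1) = (R.erase n).map (addRightEmbedding 1)
          from (map_erase _ R n).symm, card_invTablesCovering_succ_of_mem hn, ih hR', hcompl]
    · have hR' : R ⊆ range n := fun x hx =>
        mem_range.2 <| (mem_range_succ_iff.1 (hR hx)).lt_of_ne (ne_of_mem_of_not_mem hx hn)
      have hcompl : #(range (n + 1) \ R) = #(range n \ R) + 1 := by
        rw [range_add_one, insert_sdiff_of_notMem _ hn, card_insert_of_notMem (by simp)]
      have hins : ∀ u ∈ R, #(range n \ R.erase u) = #(range n \ R) + 1 := fun u hu => by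
        rw [sdiff_erase (hR' hu), card_insert_of_notMem (by simp [hu])]
      have hsum (g : Finset ℕ → ℕ) : ∑ u ∈ range (n + 1), g (R.erase u) =
          #(range (n + 1) \ R) * g R + ∑ u ∈ R, g (R.erase u) := by
        rw [← sum_sdiff hR, sum_congr rfl fun u hu => by rw [erase_eq_of_notMem (mem_sdiff.1 hu).2],
          sum_const, smul_eq_mul]
      rw [card_invTablesCovering_succ_map, card_invTablesCovering_succ n R, ih hR',
        sum_congr rfl fun u _ => ih (erase_subset u R |>.trans hR'),
        hsum fun X => (#(range n \ X) + 1) * #(invTablesCovering n X),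
        hsum fun X => #(invTablesCovering n X), sum_congr rfl fun u hu => by rw [hins u hu],
        ← mul_sum, hcompl]
      ring

def ascentSet (w : ℕ → ℕ) (m : ℕ) : Finset ℕ :=
  ((Icc 1 (m - 1)).filter fun i => w i < w (i + 1)).image w

theorem ascentBottoms_eq_ascentSet {n : ℕ} (π : Equiv.Perm (Fin n)) :
    ascentBottoms π = ascentSet (pval π) n := rfl

-- `w'` is the word `w` with a letter `M`, larger than all letters of `w`, inserted at position
-- `p + 1`.
theorem ascentSet_insert_max {w w' : ℕ → ℕ} {m p M : ℕ} (hp : p ≤ m) (hM : ∀ i, w i < M)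
    (hbefore : ∀ i, 1 ≤ i → i ≤ p → w' i = w i) (hat : w' (p + 1) = M)
    (hafter : ∀ i, p < i → i ≤ m → w' (i + 1) = w i) :
    ascentSet w' (m + 1) = ascentSet w m ∪ if p = 0 then ∅ else {w p} := by
  have hpeak (hp0 : p ≠ 0) : w' p < w' (p + 1) := by
    rw [hbefore p (by omega) le_rfl, hat]
    exact hM p
  ext x
  simp only [ascentSet, mem_union, mem_image, mem_filter, mem_Icc]
  constructor
  · rintro ⟨i, ⟨⟨hi1, him⟩, hasc⟩, rfl⟩
    rcases lt_trichotomy i p with hip | rfl | hip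
    · refine .inl ⟨i, ⟨⟨hi1, by omega⟩, ?_⟩, (hbefore i hi1 hip.le).symm⟩
      rwa [← hbefore i hi1 hip.le, ← hbefore (i + 1) (by omega) hip]
    · rw [if_neg (by omega), hbefore i hi1 le_rfl, mem_singleton]
      exact .inr rfl
    · obtain ⟨j, rfl⟩ : ∃ j, i = j + 1 := ⟨i - 1, by omega⟩
      rcases (show j = p ∨ p < j by omega) with rfl | hpj
      · rw [hat, hafter (j + 1) (by omega) (by omega)] at hasc
        exact absurd (hM (j + 1)) hasc.not_gt
      · rw [hafter j hpj (by omega), hafter (j + 1) (by omega) (by omega)] at hasc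
        exact .inl ⟨j, ⟨⟨by omega, by omega⟩, hasc⟩, (hafter j hpj (by omega)).symm⟩
  · rintro (⟨i, ⟨⟨hi1, him⟩, hasc⟩, rfl⟩ | hx)
    · rcases lt_trichotomy i p with hip | rfl | hip
      · refine ⟨i, ⟨⟨hi1, by omega⟩, ?_⟩, hbefore i hi1 hip.le⟩
        rwa [hbefore i hi1 hip.le, hbefore (i + 1) (by omega) hip]
      · exact ⟨i, ⟨⟨hi1, by omega⟩, hpeak (by omega)⟩, hbefore i hi1 le_rfl⟩
      · refine ⟨i + 1, ⟨⟨by omega, by omega⟩, ?_⟩, hafter i hip (by omega)⟩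
        rwa [hafter i hip (by omega), hafter (i + 1) (by omega) (by omega)]
    · split_ifs at hx with hp0
      · simp at hx
      · exact ⟨p, ⟨⟨by omega, by omega⟩, hpeak hp0⟩, (hbefore p (by omega) le_rfl).trans
          (mem_singleton.1 hx).symm⟩

section insertMax

variable {n : ℕ}

def insertMax (p : Fin (n + 1)) (σ : Equiv.Perm (Fin n)) : Equiv.Perm (Fin (n + 1)) :=
  (finSuccEquiv' p).trans ((Equiv.optionCongr σ).trans (finSuccEquiv' (Fin.last n)).symm)

theorem insertMax_apply_self (p : Fin (n + 1)) (σ : Equiv.Perm (Fin n)) :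
    insertMax p σ p = Fin.last n := by
  simp [insertMax]

theorem insertMax_apply_succAbove (p : Fin (n + 1)) (σ : Equiv.Perm (Fin n)) (k : Fin n) :
    insertMax p σ (p.succAbove k) = (σ k).castSucc := by
  simp [insertMax, Fin.succAbove_last]

theorem insertMax_injective :
    Function.Injective fun x : Fin (n + 1) × Equiv.Perm (Fin n) => insertMax x.1 x.2 := by
  rintro ⟨p, σ⟩ ⟨q, τ⟩ h
  simp only at h
  obtain rfl : p = q := (insertMax q τ).injective <| by
    rw [insertMax_apply_self, ← h, insertMax_apply_self]
  obtain rfl : σ = τ := Equiv.ext fun k => Fin.castSucc_injective n <| by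
    rw [← insertMax_apply_succAbove, h, insertMax_apply_succAbove]
  rfl

theorem insertMax_bijective :
    Function.Bijective fun x : Fin (n + 1) × Equiv.Perm (Fin n) => insertMax x.1 x.2 :=
  (Fintype.bijective_iff_injective_and_card _).2
    ⟨insertMax_injective, by simp [Fintype.card_perm, Nat.factorial_succ]⟩

theorem pval_succ (π : Equiv.Perm (Fin n)) (j : Fin n) : pval π (j + 1) = π j + 1 := by
  simp [pval]

theorem pval_lt (π : Equiv.Perm (Fin n)) (i : ℕ) : pval π i < n + 1 := by
  unfold pval
  split_ifs <;> omega

theorem pval_insertMax_succAbove (p : Fin (n + 1)) (σ : Equiv.Perm (Fin n)) (j : Fin n) :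
    pval (insertMax p σ) (p.succAbove j + 1) = pval σ (j + 1) := by
  rw [pval_succ, insertMax_apply_succAbove, Fin.val_castSucc, pval_succ]

theorem ascentBottoms_insertMax (p : Fin (n + 1)) (σ : Equiv.Perm (Fin n)) :
    ascentBottoms (insertMax p σ) = ascentBottoms σ ∪ if (p : ℕ) = 0 then ∅ else {pval σ p} := by
  rw [ascentBottoms_eq_ascentSet, ascentBottoms_eq_ascentSet]
  refine ascentSet_insert_max (Nat.lt_succ_iff.1 p.2) (pval_lt σ) (fun i hi hip => ?_) ?_
    (fun i hip hin => ?_)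
  · obtain ⟨j, rfl⟩ : ∃ j : Fin n, i = j + 1 := ⟨⟨i - 1, by omega⟩, show i = i - 1 + 1 by omega⟩
    have := pval_insertMax_succAbove p σ j
    rwa [Fin.succAbove_of_castSucc_lt _ _ (by rw [Fin.lt_def, Fin.val_castSucc]; omega),
      Fin.val_castSucc] at this
  · rw [pval_succ, insertMax_apply_self, Fin.val_last]
  · obtain ⟨j, rfl⟩ : ∃ j : Fin n, i = j + 1 := ⟨⟨i - 1, by omega⟩, show i = i - 1 + 1 by omega⟩
    have := pval_insertMax_succAbove p σ j
    rwa [Fin.succAbove_of_le_castSucc _ _ (by rw [Fin.le_def, Fin.val_castSucc]; omega),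
      Fin.val_succ] at this

end insertMax

theorem card_insertMax_positions {n : ℕ} (σ : Equiv.Perm (Fin n)) (S : Finset ℕ) :
    #{p : Fin (n + 1) | (if (p : ℕ) = 0 then ∅ else {pval σ p}) ⊆ S} =
      #{i ∈ range n | i + 1 ∈ S} + 1 := by
  rw [card_filter, Fin.sum_univ_succ, card_filter,
    ← Fin.sum_univ_eq_sum_range (fun i => if i + 1 ∈ S then 1 else 0),
    ← Equiv.sum_comp σ (fun j => if (j : ℕ) + 1 ∈ S then 1 else 0)]
  simp only [Fin.val_zero, Fin.val_succ, pval_succ]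
  simp [add_comm]

theorem card_perms_succ (n : ℕ) (S : Finset ℕ) :
    #{π : Equiv.Perm (Fin (n + 1)) | ascentBottoms π ⊆ S} =
      (#{i ∈ range n | i + 1 ∈ S} + 1) * #{σ : Equiv.Perm (Fin n) | ascentBottoms σ ⊆ S} := by
  calc #{π : Equiv.Perm (Fin (n + 1)) | ascentBottoms π ⊆ S}
      = ∑ σ, ∑ p, if ascentBottoms (insertMax p σ) ⊆ S then 1 else 0 := by
        rw [card_filter, ← (Equiv.ofBijective _ insertMax_bijective).sum_comp,
          Fintype.sum_prod_type_right]
        rfl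
    _ = ∑ σ with ascentBottoms σ ⊆ S, (#{i ∈ range n | i + 1 ∈ S} + 1) := by
        rw [sum_filter]
        refine sum_congr rfl fun σ _ => ?_
        simp only [ascentBottoms_insertMax, union_subset_iff]
        split_ifs with h
        · simp only [h, true_and]
          rw [← card_filter, card_insertMax_positions]
        · simp [h]
    _ = _ := by rw [sum_const, smul_eq_mul, mul_comm]

-- The set `[0, n) \ (n - S)` of the statement, written so that it shifts by one as `n` grows for
-- every `S`; `S.image (n - ·)` would send every `s ≥ n` to `0`.
def requiredValues (n : ℕ) (S : Finset ℕ) : Finset ℕ :=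
  (range n).filter fun x => n - x ∉ S

theorem requiredValues_subset_range (n : ℕ) (S : Finset ℕ) : requiredValues n S ⊆ range n :=
  filter_subset _ _

theorem erase_zero_requiredValues_succ (n : ℕ) (S : Finset ℕ) :
    (requiredValues (n + 1) S).erase 0 = (requiredValues n S).map (addRightEmbedding 1) := by
  ext x
  simp only [requiredValues, mem_erase, mem_filter, mem_range, mem_map, addRightEmbedding_apply]
  constructor
  · rintro ⟨hx0, hxn, hxS⟩
    exact ⟨x - 1, ⟨by omega, by rwa [show n - (x - 1) = n + 1 - x by omega]⟩, by omega⟩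
  · rintro ⟨y, ⟨hyn, hyS⟩, rfl⟩
    exact ⟨by omega, by omega, by rwa [show n + 1 - (y + 1) = n - y by omega]⟩

theorem card_range_sdiff_requiredValues (n : ℕ) (S : Finset ℕ) :
    #(range n \ requiredValues n S) = #{i ∈ range n | i + 1 ∈ S} := by
  have : range n \ requiredValues n S = {x ∈ range n | n - x ∈ S} := by
    ext x
    simp only [requiredValues, mem_sdiff, mem_filter, not_and, not_not]
    tauto
  rw [this, card_filter, card_filter, ← sum_range_reflect]
  refine sum_congr rfl fun i hi => ?_
  rw [show n - (n - 1 - i) = i + 1 by have := mem_range.1 hi; omega]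

theorem erase_zero_range_sdiff_image (n : ℕ) (S : Finset ℕ) :
    (range n \ S.image (n - ·)).erase 0 = (requiredValues n S).erase 0 := by
  ext x
  simp only [requiredValues, mem_erase, mem_sdiff, mem_filter, mem_range, mem_image]
  refine and_congr_right fun hx0 => and_congr_right fun hxn => not_congr ⟨?_, ?_⟩
  · rintro ⟨s, hs, rfl⟩
    rwa [Nat.sub_sub_self (by omega)]
  · exact fun h => ⟨n - x, h, Nat.sub_sub_self hxn.le⟩

theorem card_perms_eq_card_invTablesCovering (n : ℕ) (S : Finset ℕ) :
    #{π : Equiv.Perm (Fin n) | ascentBottoms π ⊆ S} =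
      #(invTablesCovering n (requiredValues n S)) := by
  induction n with
  | zero => rfl
  | succ n ih =>
    rw [card_perms_succ, ih, ← invTablesCovering_erase_zero n.succ_pos,
      erase_zero_requiredValues_succ, card_invTablesCovering_map_succ
      (requiredValues_subset_range n S), card_range_sdiff_requiredValues]

theorem card_invTablesCovering_eq_natCard (n : ℕ) (R : Finset ℕ) :
    #(invTablesCovering n R) = Nat.card {b : Fin n → ℕ // IsInvTable b ∧ R ⊆ dent b} := by
  rw [← Nat.card_eq_finsetCard]
  exact Nat.card_congr (Equiv.subtypeEquivRight fun b => by
    rw [invTablesCovering, mem_filter, mem_invTables])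

theorem card_ascentBottoms_subset_eq_card_invTables_missing_general (n : ℕ) (hn : 1 ≤ n)
    (S : Finset ℕ) :
    Nat.card {π : Equiv.Perm (Fin n) // ascentBottoms π ⊆ S} =
      Nat.card {b : Fin n → ℕ // IsInvTable b ∧
        Finset.range n \ S.image (fun s => n - s) ⊆ dent b} := by
  calc Nat.card {π : Equiv.Perm (Fin n) // ascentBottoms π ⊆ S}
      = #{π : Equiv.Perm (Fin n) | ascentBottoms π ⊆ S} := by
        rw [Nat.card_eq_fintype_card, Fintype.card_subtype]
    _ = #(invTablesCovering n (requiredValues n S)) := card_perms_eq_card_invTablesCovering n S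
    _ = #(invTablesCovering n (range n \ S.image (n - ·))) := by
        rw [← invTablesCovering_erase_zero hn, ← erase_zero_range_sdiff_image,
          invTablesCovering_erase_zero hn]
    _ = _ := card_invTablesCovering_eq_natCard n _

/-- The number of permutations of `{1, …, n}` whose set of ascent bottoms is contained in
`S = {s_1, …, s_k} ⊆ {1, …, n-1}` equals the number of inversion tables `b` of length `n`
with `{0, 1, …, n-1} \ {n - s_1, …, n - s_k} ⊆ dent b`, i.e. such that every element of
`{1, …, n-1}` missing from `dent b` lies in `{n - s_1, …, n - s_k}`. -/
theorem card_ascentBottoms_subset_eq_card_invTables_missing (n : ℕ) (hn : 1 ≤ n)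
    (S : Finset ℕ) (hS : S ⊆ Finset.Icc 1 (n - 1)) :
    Nat.card {π : Equiv.Perm (Fin n) // ascentBottoms π ⊆ S} =
      Nat.card {b : Fin n → ℕ // IsInvTable b ∧
        Finset.range n \ S.image (fun s => n - s) ⊆ dent b} :=
  card_ascentBottoms_subset_eq_card_invTables_missing_general n hn S
end
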